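/- For any secondary structure P of a string S, the number of stacking pairs of P is at most min(#AA, #UU) + min(#GG, #CC) + #UA/2 + #GC/2, where #XY denotes the number of occurrences of the 2-substring XY in S, provided the only 2-substrings of S whose conjugates also occur in S are drawn from {AA,UU,UA,GG,CC,GC}. -/
import Mathlib


inductive Base : Type
  | A | U | G | C
deriving DecidableEq, Repr

open Base

def isWC : Base → Base → Prop := fun x y =>
  (x = A ∧ y = U) ∨ (x = U ∧ y = A) ∨ (x = C ∧ y = G) ∨ (x = G ∧ y = C)

instance (x y : Base) : Decidable (isWC x y) := by unfold isWC; infer_instance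

def at' (S : List Base) (i : ℕ) : Base := S.getD i Base.A

def ValidSS (S : List Base) (P : Finset (ℕ × ℕ)) : Prop :=
  (∀ p ∈ P, p.1 + 2 ≤ p.2 ∧ p.2 < S.length ∧ isWC (at' S p.1) (at' S p.2)) ∧
  (∀ p ∈ P, ∀ q ∈ P, p ≠ q → p.1 ≠ q.1 ∧ p.1 ≠ q.2 ∧ p.2 ≠ q.1 ∧ p.2 ≠ q.2)

def numSP (P : Finset (ℕ × ℕ)) : ℕ :=
  (P.filter (fun p => (p.1 + 1, p.2 - 1) ∈ P ∧ p.1 + 4 ≤ p.2)).card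

/-- Complement of a base. -/
def hat : Base → Base
  | A => U | U => A | C => G | G => C

/-- The conjugate of a 2-substring `(x, y)` is `(ŷ, x̂)`. -/
def conj2 (p : Base × Base) : Base × Base := (hat p.2, hat p.1)

/-- `cnt S x y` = number of occurrences of the 2-substring `xy` in `S`. -/
def cnt (S : List Base) (x y : Base) : ℕ :=
  ((Finset.range (S.length - 1)).filter (fun t => at' S t = x ∧ at' S (t + 1) = y)).card

lemma isWC_hat {x y : Base} (h : isWC x y) : y = hat x ∧ x = hat y := by
  revert h; cases x <;> cases y <;> decide

/-- Counting bound: provided the only 2-substrings of `S` whose conjugates also occur in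
`S` come from `{AA, UU, UA, GG, CC, GC}`, every secondary structure of `S` has at most
`min(#AA,#UU) + min(#GG,#CC) + #UA/2 + #GC/2` stacking pairs (stated multiplied by 2 to
stay in `ℕ`). -/
theorem stacking_pair_counting_bound
    (S : List Base) (P : Finset (ℕ × ℕ)) (hval : ValidSS S P)
    (hconj : ∀ t u, t + 1 < S.length → u + 1 < S.length →
      (at' S u, at' S (u + 1)) = conj2 (at' S t, at' S (t + 1)) →
      ((at' S t, at' S (t + 1)) = (A, A) ∨ (at' S t, at' S (t + 1)) = (U, U) ∨
       (at' S t, at' S (t + 1)) = (U, A) ∨ (at' S t, at' S (t + 1)) = (G, G) ∨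
       (at' S t, at' S (t + 1)) = (C, C) ∨ (at' S t, at' S (t + 1)) = (G, C))) :
    2 * numSP P ≤
      2 * min (cnt S A A) (cnt S U U) + 2 * min (cnt S G G) (cnt S C C) +
        cnt S U A + cnt S G C := by
  classical
  obtain ⟨hv1, hv2⟩ := hval
  set SP : Finset (ℕ × ℕ) :=
    P.filter (fun p => (p.1 + 1, p.2 - 1) ∈ P ∧ p.1 + 4 ≤ p.2) with hSPdef
  have hnum : numSP P = SP.card := rfl
  have hmem : ∀ p ∈ SP, p ∈ P ∧ (p.1 + 1, p.2 - 1) ∈ P ∧ p.1 + 4 ≤ p.2 := by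
    intro p hp
    simpa [hSPdef, Finset.mem_filter] using hp
  have hlen : ∀ p ∈ SP, p.1 + 4 ≤ p.2 ∧ p.2 < S.length := by
    intro p hp
    obtain ⟨hpP, _, h4⟩ := hmem p hp
    exact ⟨h4, (hv1 p hpP).2.1⟩
  -- key conjugacy fact
  have key : ∀ p ∈ SP, (at' S (p.2 - 1), at' S p.2) = conj2 (at' S p.1, at' S (p.1 + 1)) := by
    intro p hp
    obtain ⟨hpP, hp2P, h4⟩ := hmem p hp
    have h1 := (hv1 p hpP).2.2
    have h2 := (hv1 _ hp2P).2.2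
    have e1 := (isWC_hat h1).1
    have e2 := (isWC_hat h2).1
    simp only [conj2]
    exact Prod.ext e2 e1
  -- each stacking pair's left 2-substring is one of the six types
  have six : ∀ p ∈ SP,
      (at' S p.1, at' S (p.1 + 1)) = (A, A) ∨ (at' S p.1, at' S (p.1 + 1)) = (U, U) ∨
      (at' S p.1, at' S (p.1 + 1)) = (U, A) ∨ (at' S p.1, at' S (p.1 + 1)) = (G, G) ∨
      (at' S p.1, at' S (p.1 + 1)) = (C, C) ∨ (at' S p.1, at' S (p.1 + 1)) = (G, C) := by
    intro p hp
    obtain ⟨h4, hL⟩ := hlen p hp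
    have e : p.2 - 1 + 1 = p.2 := by omega
    refine hconj p.1 (p.2 - 1) (by omega) (by omega) ?_
    rw [e]
    exact key p hp
  -- T x y : stacking pairs whose left 2-substring is xy
  set T : Base → Base → Finset (ℕ × ℕ) := fun x y =>
    SP.filter (fun p => at' S p.1 = x ∧ at' S (p.1 + 1) = y) with hTdef
  -- pair bound
  have pairbound : ∀ x y x' y', conj2 (x', y') = (x, y) →
      (T x y).card + (T x' y').card ≤ cnt S x y := by
    intro x y x' y' hc
    have hT1 : T x y ⊆ SP := Finset.filter_subset _ _
    have hT2 : T x' y' ⊆ SP := Finset.filter_subset _ _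
    set I1 : Finset ℕ := (T x y).image Prod.fst with hI1
    set I2 : Finset ℕ := (T x' y').image (fun p => p.2 - 1) with hI2
    have hSPP : SP ⊆ P := Finset.filter_subset _ _
    -- injectivity of left positions
    have inj1 : Set.InjOn Prod.fst (T x y : Set (ℕ × ℕ)) := by
      intro p hp q hq h
      by_contra hne
      exact (hv2 p (hSPP (hT1 hp)) q (hSPP (hT1 hq)) hne).1 h
    have inj2 : Set.InjOn (fun p : ℕ × ℕ => p.2 - 1) (T x' y' : Set (ℕ × ℕ)) := by
      intro p hp q hq h
      have h4p := (hlen p (hT2 hp)).1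
      have h4q := (hlen q (hT2 hq)).1
      by_contra hne
      have := (hv2 p (hSPP (hT2 hp)) q (hSPP (hT2 hq)) hne).2.2.2
      simp only at h
      omega
    have c1 : I1.card = (T x y).card := Finset.card_image_of_injOn inj1
    have c2 : I2.card = (T x' y').card := Finset.card_image_of_injOn inj2
    -- images land in the position set counted by cnt
    have sub1 : I1 ⊆ (Finset.range (S.length - 1)).filter
        (fun t => at' S t = x ∧ at' S (t + 1) = y) := by
      intro a ha
      obtain ⟨p, hp, rfl⟩ := Finset.mem_image.mp ha
      obtain ⟨hpSP, hx, hy⟩ := Finset.mem_filter.mp hp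
      obtain ⟨h4, hL⟩ := hlen p hpSP
      exact Finset.mem_filter.mpr ⟨Finset.mem_range.mpr (by omega), hx, hy⟩
    have sub2 : I2 ⊆ (Finset.range (S.length - 1)).filter
        (fun t => at' S t = x ∧ at' S (t + 1) = y) := by
      intro a ha
      obtain ⟨p, hp, rfl⟩ := Finset.mem_image.mp ha
      obtain ⟨hpSP, hx, hy⟩ := Finset.mem_filter.mp hp
      obtain ⟨h4, hL⟩ := hlen p hpSP
      have e : p.2 - 1 + 1 = p.2 := by omega
      have hk := key p hpSP
      rw [hx, hy, hc] at hk
      have hk1 : at' S (p.2 - 1) = x := congrArg Prod.fst hk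
      have hk2 : at' S p.2 = y := congrArg Prod.snd hk
      refine Finset.mem_filter.mpr ⟨Finset.mem_range.mpr (by omega), hk1, ?_⟩
      rw [e]; exact hk2
    -- disjointness: a left position never equals a right-minus-one position
    have disj : Disjoint I1 I2 := by
      rw [Finset.disjoint_left]
      intro a ha1 ha2
      obtain ⟨p, hp, hpa⟩ := Finset.mem_image.mp ha1
      obtain ⟨q, hq, hqa⟩ := Finset.mem_image.mp ha2
      have hpSP := hT1 hp
      have hqSP := hT2 hq
      obtain ⟨hpP, _, h4p⟩ := hmem p hpSP
      obtain ⟨hqP, hq2P, h4q⟩ := hmem q hqSP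
      -- p.1 = q.2 - 1
      by_cases hpq : p = (q.1 + 1, q.2 - 1)
      · rw [hpq] at hpa
        have : q.1 + 1 = a := hpa
        omega
      · have h2 : p.1 ≠ q.2 - 1 := (hv2 p hpP (q.1 + 1, q.2 - 1) hq2P hpq).2.1
        omega
    have := Finset.card_le_card (Finset.union_subset sub1 sub2)
    rw [Finset.card_union_of_disjoint disj, c1, c2] at this
    exact this
  -- cover : SP is contained in the union of the six type classes
  have cover : SP ⊆ T A A ∪ T U U ∪ T U A ∪ T G G ∪ T C C ∪ T G C := by
    intro p hp
    have h6 := six p hp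
    simp only [Finset.mem_union, hTdef, Finset.mem_filter, Prod.mk.injEq] at h6 ⊢
    tauto
  have hsum : SP.card ≤ (T A A).card + (T U U).card + (T U A).card + (T G G).card +
      (T C C).card + (T G C).card := by
    calc SP.card ≤ (T A A ∪ T U U ∪ T U A ∪ T G G ∪ T C C ∪ T G C).card :=
          Finset.card_le_card cover
      _ ≤ _ := by
          refine le_trans (Finset.card_union_le _ _) ?_
          gcongr
          refine le_trans (Finset.card_union_le _ _) ?_
          gcongr
          refine le_trans (Finset.card_union_le _ _) ?_
          gcongr
          refine le_trans (Finset.card_union_le _ _) ?_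
          gcongr
          exact Finset.card_union_le _ _
  -- the six bounds
  have bAA : (T A A).card + (T U U).card ≤ cnt S A A := pairbound A A U U rfl
  have bUU : (T U U).card + (T A A).card ≤ cnt S U U := pairbound U U A A rfl
  have bGG : (T G G).card + (T C C).card ≤ cnt S G G := pairbound G G C C rfl
  have bCC : (T C C).card + (T G G).card ≤ cnt S C C := pairbound C C G G rfl
  have bUA : (T U A).card + (T U A).card ≤ cnt S U A := pairbound U A U A rfl
  have bGC : (T G C).card + (T G C).card ≤ cnt S G C := pairbound G C G C rfl
  have m1 : (T A A).card + (T U U).card ≤ min (cnt S A A) (cnt S U U) :=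
    le_min bAA (by omega)
  have m2 : (T G G).card + (T C C).card ≤ min (cnt S G G) (cnt S C C) :=
    le_min bGG (by omega)
  rw [hnum]
  omega
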